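/- Let c > 0 and define Λ : ℝ → ℝ by Λ(λ) := (1/2)·λ(λ+c) if λ ≥ −c/2 and Λ(λ) := −c²/8 if λ < −c/2. Then the Legendre transform Λ*(x) := sup_{λ∈ℝ} (λx − Λ(λ)), taking values in the extended reals, satisfies Λ*(x) = (1/2)·(x − c/2)² for every x ≥ 0 and Λ*(x) = +∞ for every x < 0. -/
import Mathlib


open Real

/-- Corrected limiting logarithmic moment generating function for the distance process
of Brownian motion on a hyperbolic space (with `c = 2k + m`):
`Λ(λ) = λ(λ+c)/2` for `λ ≥ -c/2` and `Λ(λ) = -c²/8` for `λ < -c/2`. -/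
noncomputable def hiraoLambda (c lam : ℝ) : ℝ :=
  if -c / 2 ≤ lam then lam * (lam + c) / 2 else -c ^ 2 / 8

/-- Legendre transform of `hiraoLambda c`, with values in the extended reals. -/
noncomputable def hiraoLambdaStar (c x : ℝ) : EReal :=
  ⨆ lam : ℝ, ((lam * x - hiraoLambda c lam : ℝ) : EReal)

/-- The Legendre transform `Λ*` of the corrected function `Λ` satisfies
`Λ*(x) = (x - c/2)²/2` for `x ≥ 0` and `Λ*(x) = +∞` for `x < 0`. -/
theorem hirao_rate_function (c : ℝ) (hc : 0 < c) :
    (∀ x : ℝ, 0 ≤ x → hiraoLambdaStar c x = (((x - c / 2) ^ 2 / 2 : ℝ) : EReal)) ∧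
    (∀ x : ℝ, x < 0 → hiraoLambdaStar c x = ⊤) := by
  constructor
  · intro x hx
    apply le_antisymm
    · apply iSup_le
      intro lam
      rw [EReal.coe_le_coe_iff]
      unfold hiraoLambda
      split_ifs with h
      · nlinarith [sq_nonneg (lam - (x - c / 2))]
      · push_neg at h
        nlinarith [mul_nonneg (by linarith : (0:ℝ) ≤ -c/2 - lam) hx, sq_nonneg x]
    · have := le_iSup (fun lam : ℝ => ((lam * x - hiraoLambda c lam : ℝ) : EReal)) (x - c/2)
      refine le_trans ?_ this
      rw [EReal.coe_le_coe_iff]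
      unfold hiraoLambda
      rw [if_pos (by linarith)]
      ring_nf
      nlinarith
  · intro x hx
    rw [hiraoLambdaStar, iSup_eq_top]
    intro b hb
    induction b with
    | bot => exact ⟨0, EReal.bot_lt_coe _⟩
    | coe r =>
      set lam : ℝ := min (-c) ((r - c^2/8)/x - 1) with hlam
      refine ⟨lam, ?_⟩
      rw [EReal.coe_lt_coe_iff]
      have h1 : lam ≤ -c := min_le_left _ _
      have h2 : lam ≤ (r - c^2/8)/x - 1 := min_le_right _ _
      have hlt : ¬ (-c/2 ≤ lam) := by push_neg; linarith
      rw [hiraoLambda, if_neg hlt]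
      have : lam < (r - c^2/8)/x := by linarith
      have hmul : lam * x > ((r - c^2/8)/x) * x := by
        exact (mul_lt_mul_right_of_neg hx).mpr this
      rw [div_mul_cancel₀ _ (ne_of_lt hx)] at hmul
      linarith
    | top => exact absurd hb (lt_irrefl _)
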